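/- arXiv:2301.03894 — 4 statements merged into one kernel-verified Lean document; each statement's English description precedes it below -/
import Mathlib

section
/- Let F₀ be a twice differentiable cdf with infinite right endpoint, eventually positive density p₀ = F₀′, satisfying the von Mises condition with index γ ≥ 0. Then lim_{u→∞} u p₀(u) / ∫_u^∞ x p₀²(x)/(1 − F₀(x)) dx = 1. -/
/-! With `p = F₀'`, the integrand `q = x p² / (1 - F₀)` is asymptotically equivalent to
`r = -(x p(x))' = -(p + x p')`: indeed `r / q = -(1 - F₀)/(x p) - (1 - F₀) p' / p²`, whose
second term tends to `γ + 1` by the von Mises condition and whose first tends to `-γ` because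
`(1 - F₀)/p` has derivative `-1 - (1 - F₀) p' / p² → γ`. Since `p` is eventually decreasing,
`x p(x) ≤ 2 (F₀(x) - F₀(x/2)) → 0`, so `∫_u^∞ r = u p(u)`, and asymptotically equivalent
nonnegative integrands have asymptotically equivalent tail integrals. -/

open Filter Real MeasureTheory

/-- `F` is a cumulative distribution function. -/
def IsCDF (F : ℝ → ℝ) : Prop :=
  Monotone F ∧ Tendsto F atBot (nhds 0) ∧ Tendsto F atTop (nhds 1)

/-- The von Mises condition with index `γ`. -/
def VonMises (F₀ : ℝ → ℝ) (γ : ℝ) : Prop :=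
  Tendsto (fun x => (1 - F₀ x) * deriv (deriv F₀) x / (deriv F₀ x) ^ 2)
    atTop (nhds (-γ - 1))

open Asymptotics Set Topology

theorem isLittleO_id_of_hasDerivAt_of_tendsto_zero {g g' : ℝ → ℝ}
    (hg : ∀ᶠ x in atTop, HasDerivAt g (g' x) x) (hg' : Tendsto g' atTop (𝓝 0)) :
    g =o[atTop] id := by
  refine IsLittleO.of_bound fun c hc => ?_
  have hg'_norm : Tendsto (fun x => ‖g' x‖) atTop (𝓝 0) := by simpa using hg'.norm
  obtain ⟨a, ha⟩ := eventually_atTop.1 <| (hg.and (hg'_norm.eventually (ge_mem_nhds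
    (half_pos hc)))).and (eventually_ge_atTop 0)
  have hmv : ∀ x ∈ Ici a, ‖g x - g a‖ ≤ c / 2 * (x - a) := fun x (hx : a ≤ x) => by
    simpa [Real.norm_eq_abs, abs_of_nonneg (sub_nonneg.2 hx)] using
      (convex_Ici a).norm_image_sub_le_of_norm_hasDerivWithin_le
        (fun y hy => (ha y hy).1.1.hasDerivWithinAt) (fun y hy => (ha y hy).1.2)
        self_mem_Ici hx
  filter_upwards [eventually_ge_atTop a, eventually_ge_atTop (2 * ‖g a‖ / c)] with x hxa hxg
  have ha0 : 0 ≤ a := (ha a le_rfl).2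
  have hga : ‖g a‖ ≤ c / 2 * x := by
    rw [div_le_iff₀ hc] at hxg; linarith
  calc ‖g x‖ ≤ ‖g a‖ + ‖g x - g a‖ := norm_le_norm_add_norm_sub' (g x) (g a)
    _ ≤ c / 2 * x + c / 2 * (x - a) := add_le_add hga (hmv x hxa)
    _ ≤ c * ‖id x‖ := by
      rw [id, Real.norm_of_nonneg (ha0.trans hxa)]; nlinarith

theorem tendsto_div_id_of_hasDerivAt_of_tendsto {f f' : ℝ → ℝ} {L : ℝ}
    (hf : ∀ᶠ x in atTop, HasDerivAt f (f' x) x) (hf' : Tendsto f' atTop (𝓝 L)) :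
    Tendsto (fun x => f x / x) atTop (𝓝 L) := by
  have hlin : (fun x => f x - L * x) =o[atTop] id :=
    isLittleO_id_of_hasDerivAt_of_tendsto_zero (g' := fun x => f' x - L)
      (hf.mono fun x hx => hx.sub ((hasDerivAt_id x).const_mul L) |>.congr_deriv (by simp))
      (by simpa using hf'.sub_const L)
  refine (by simpa using hlin.tendsto_div_nhds_zero.add_const L :
    Tendsto (fun x => (f x - L * x) / x + L) atTop (𝓝 L)).congr' ?_
  filter_upwards [eventually_ne_atTop 0] with x hx
  field_simp
  ring

theorem tendsto_mul_of_hasDerivAt_of_antitoneOn {F f : ℝ → ℝ} {a c : ℝ}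
    (hF : ∀ x ∈ Ici a, HasDerivAt F (f x) x) (hFc : Tendsto F atTop (𝓝 c))
    (hanti : AntitoneOn f (Ici a)) (hnonneg : ∀ x ∈ Ici a, 0 ≤ f x) :
    Tendsto (fun x => x * f x) atTop (𝓝 0) := by
  have hhalf : Tendsto (fun t : ℝ => 2 * (F t - F (t / 2))) atTop (𝓝 0) := by
    simpa using ((hFc.sub (hFc.comp (tendsto_id.atTop_div_const two_pos))).const_mul 2)
  refine squeeze_zero' ?_ ?_ hhalf
  · filter_upwards [eventually_ge_atTop (max a 0)] with t ht
    exact mul_nonneg (le_of_max_le_right ht) (hnonneg t (le_of_max_le_left ht))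
  · filter_upwards [eventually_gt_atTop (max (2 * a) 0)] with t ht
    have ht0 : 0 < t := (le_max_right _ _).trans_lt ht
    have hat : a ≤ t / 2 := by linarith [le_max_left (2 * a) 0]
    obtain ⟨ξ, hξ, hslope⟩ := exists_hasDerivAt_eq_slope F f (half_lt_self ht0)
      (fun x hx => (hF x (hat.trans hx.1)).continuousAt.continuousWithinAt)
      (fun x hx => hF x (hat.trans hx.1.le))
    have hfξ : f t ≤ f ξ :=
      hanti (hat.trans hξ.1.le) (hat.trans (half_le_self ht0.le)) hξ.2.le
    rw [hslope, le_div_iff₀ (by linarith)] at hfξ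
    linarith

theorem Asymptotics.IsEquivalent.setIntegral_Ioi {r q : ℝ → ℝ} (h : r ~[atTop] q)
    (hq : ∀ᶠ x in atTop, 0 ≤ q x) (hr : IntegrableAtFilter r atTop)
    (hqi : IntegrableAtFilter q atTop) :
    (fun u => ∫ x in Ioi u, r x) ~[atTop] fun u => ∫ x in Ioi u, q x := by
  obtain ⟨b, hrb⟩ := integrableAtFilter_atTop_iff.1 hr
  obtain ⟨b', hqb⟩ := integrableAtFilter_atTop_iff.1 hqi
  refine IsLittleO.of_bound fun c hc => ?_
  obtain ⟨a, ha⟩ := eventually_atTop.1 ((h.isLittleO.bound hc).and hq)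
  filter_upwards [eventually_ge_atTop a, eventually_ge_atTop b, eventually_ge_atTop b']
    with u hua hub hub'
  have ha' : ∀ x ∈ Ioi u, ‖r x - q x‖ ≤ c * ‖q x‖ ∧ 0 ≤ q x := fun x hx =>
    ha x (hua.trans (le_of_lt hx))
  have hqu : IntegrableOn q (Ioi u) := hqb.mono_set (Ioi_subset_Ici hub')
  have hint_nonneg : 0 ≤ ∫ x in Ioi u, q x :=
    setIntegral_nonneg measurableSet_Ioi fun x hx => (ha' x hx).2
  calc ‖(∫ x in Ioi u, r x) - ∫ x in Ioi u, q x‖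
      = ‖∫ x in Ioi u, (r x - q x)‖ := by
        rw [integral_sub (hrb.mono_set (Ioi_subset_Ici hub)) hqu]
    _ ≤ ∫ x in Ioi u, c * q x := by
        refine norm_integral_le_of_norm_le (hqu.const_mul c) ?_
        refine (ae_restrict_iff' measurableSet_Ioi).2 (ae_of_all _ fun x hx => ?_)
        simpa [Real.norm_of_nonneg (ha' x hx).2] using (ha' x hx).1
    _ = c * ‖∫ x in Ioi u, q x‖ := by
        rw [integral_const_mul, Real.norm_of_nonneg hint_nonneg]

theorem neg_of_hasDerivAt_pos_of_tendsto_zero {g g' : ℝ → ℝ} {a : ℝ}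
    (hg : ∀ x ∈ Ici a, HasDerivAt g (g' x) x) (hg' : ∀ x ∈ Ici a, 0 < g' x)
    (hg0 : Tendsto g atTop (𝓝 0)) : ∀ x ∈ Ici a, g x < 0 := by
  have hmono : StrictMonoOn g (Ici a) := strictMonoOn_of_hasDerivWithinAt_pos (convex_Ici a)
    (fun x hx => (hg x hx).continuousAt.continuousWithinAt)
    (fun x hx => (hg x (interior_subset hx)).hasDerivWithinAt)
    (fun x hx => hg' x (interior_subset hx))
  intro x (hx : a ≤ x)
  have hx1 : x + 1 ∈ Ici a := by simp only [mem_Ici]; linarith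
  have hle : g (x + 1) ≤ 0 := ge_of_tendsto hg0 <| by
    filter_upwards [eventually_ge_atTop (x + 1)] with y hy
    exact hmono.monotoneOn hx1 (hx1.out.trans hy) hy
  exact (hmono hx hx1 (lt_add_one x)).trans_le hle

theorem tendsto_neg_div_integral_Ioi_of_hasDerivAt {g r q : ℝ → ℝ}
    (hg : ∀ᶠ x in atTop, HasDerivAt g (r x) x) (hg0 : Tendsto g atTop (𝓝 0))
    (hrq : Tendsto (fun x => r x / q x) atTop (𝓝 1)) (hq : ∀ᶠ x in atTop, 0 < q x)
    (hqm : StronglyMeasurableAtFilter q atTop) :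
    Tendsto (fun u => -g u / ∫ x in Ioi u, q x) atTop (𝓝 1) := by
  obtain ⟨a, ha⟩ : ∃ a, ∀ x ≥ a, HasDerivAt g (r x) x ∧ 0 < r x :=
    eventually_atTop.1 <| by
      filter_upwards [hg, hrq.eventually_const_lt one_pos, hq] with x hgx hrqx hqx
      exact ⟨hgx, (div_pos_iff_of_pos_right hqx).1 hrqx⟩
  have hr_int : IntegrableAtFilter r atTop := ⟨Ioi a, Ioi_mem_atTop a,
    integrableOn_Ioi_deriv_of_nonneg' (fun x hx => (ha x hx).1) (fun x hx => (ha x hx.le).2.le)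
      hg0⟩
  have hequiv : r ~[atTop] q := isEquivalent_of_tendsto_one hrq
  have htail : (fun u => ∫ x in Ioi u, r x) =ᶠ[atTop] fun u => -g u := by
    filter_upwards [eventually_ge_atTop a] with u hu
    rw [integral_Ioi_of_hasDerivAt_of_nonneg' (fun x hx => (ha x (hu.trans hx)).1)
      (fun x hx => (ha x (hu.trans hx.le)).2.le) hg0, zero_sub]
  have hg_ne : ∀ᶠ u in atTop, -g u ≠ 0 := by
    filter_upwards [eventually_ge_atTop a] with u hu
    exact (neg_pos.2 (neg_of_hasDerivAt_pos_of_tendsto_zero (fun x hx => (ha x hx).1)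
      (fun x hx => (ha x hx).2) hg0 u hu)).ne'
  have hq_int : IntegrableAtFilter q atTop := hequiv.symm.isBigO.integrableAtFilter hqm hr_int
  have hequiv_tail : (fun u => -g u) ~[atTop] fun u => ∫ x in Ioi u, q x :=
    (hequiv.setIntegral_Ioi (hq.mono fun _ => le_of_lt) hr_int hq_int).congr_left htail
  simpa using ((isEquivalent_iff_tendsto_one hg_ne).1 hequiv_tail.symm).inv₀ one_ne_zero

namespace VonMises

variable {F₀ : ℝ → ℝ} {γ : ℝ}

theorem hasDerivAt_tail_div_deriv {x : ℝ} (hdiff : DifferentiableAt ℝ F₀ x)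
    (hdiff2 : DifferentiableAt ℝ (deriv F₀) x) (hp : deriv F₀ x ≠ 0) :
    HasDerivAt (fun y => (1 - F₀ y) / deriv F₀ y)
      (-1 - (1 - F₀ x) * deriv (deriv F₀) x / deriv F₀ x ^ 2) x :=
  ((hdiff.hasDerivAt.const_sub 1).div hdiff2.hasDerivAt hp).congr_deriv (by field_simp)

theorem tendsto_tail_div_mul_deriv (hVM : VonMises F₀ γ)
    (hdiff : ∀ x, DifferentiableAt ℝ F₀ x)
    (hdiff2 : ∀ x, DifferentiableAt ℝ (deriv F₀) x)
    (hpos : ∀ᶠ x in atTop, 0 < deriv F₀ x) :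
    Tendsto (fun x => (1 - F₀ x) / (x * deriv F₀ x)) atTop (𝓝 γ) := by
  have h := tendsto_div_id_of_hasDerivAt_of_tendsto
    (hpos.mono fun x hx => hasDerivAt_tail_div_deriv (hdiff x) (hdiff2 x) hx.ne')
    (hVM.const_sub (-1 : ℝ))
  rw [show -1 - (-γ - 1) = γ by ring] at h
  simpa only [div_div, mul_comm] using h

theorem eventually_deriv_deriv_neg (hVM : VonMises F₀ γ) (hγ : -1 < γ)
    (hend : ∀ x, F₀ x < 1) (hpos : ∀ᶠ x in atTop, 0 < deriv F₀ x) :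
    ∀ᶠ x in atTop, deriv (deriv F₀) x < 0 := by
  filter_upwards [hVM.eventually_lt_const (by linarith : -γ - 1 < 0), hpos] with x hx hp
  have hF : 0 < 1 - F₀ x := sub_pos.2 (hend x)
  by_contra! h
  exact (div_nonneg (mul_nonneg hF.le h) (sq_nonneg _)).not_gt hx

theorem tendsto_mul_deriv_zero (hVM : VonMises F₀ γ) (hγ : -1 < γ)
    {c : ℝ} (hlim : Tendsto F₀ atTop (𝓝 c)) (hend : ∀ x, F₀ x < 1)
    (hdiff : ∀ x, DifferentiableAt ℝ F₀ x)
    (hdiff2 : ∀ x, DifferentiableAt ℝ (deriv F₀) x)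
    (hpos : ∀ᶠ x in atTop, 0 < deriv F₀ x) :
    Tendsto (fun x => x * deriv F₀ x) atTop (𝓝 0) := by
  obtain ⟨a, ha⟩ := eventually_atTop.1 <|
    (hVM.eventually_deriv_deriv_neg hγ hend hpos).and hpos
  have hanti : AntitoneOn (deriv F₀) (Ici a) := by
    refine antitoneOn_of_deriv_nonpos (convex_Ici a)
      (fun x _ => (hdiff2 x).continuousAt.continuousWithinAt)
      (fun x _ => (hdiff2 x).differentiableWithinAt) fun x hx => ?_
    rw [interior_Ici] at hx
    exact (ha x (le_of_lt hx)).1.le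
  exact tendsto_mul_of_hasDerivAt_of_antitoneOn (fun x _ => (hdiff x).hasDerivAt) hlim hanti
    fun x hx => (ha x hx).2.le

theorem tendsto_neg_deriv_mul_deriv_div (hVM : VonMises F₀ γ)
    (hend : ∀ x, F₀ x < 1)
    (hdiff : ∀ x, DifferentiableAt ℝ F₀ x)
    (hdiff2 : ∀ x, DifferentiableAt ℝ (deriv F₀) x)
    (hpos : ∀ᶠ x in atTop, 0 < deriv F₀ x) :
    Tendsto (fun x => -(deriv F₀ x + x * deriv (deriv F₀) x) /
      (x * deriv F₀ x ^ 2 / (1 - F₀ x))) atTop (𝓝 1) := by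
  have h := ((hVM.tendsto_tail_div_mul_deriv hdiff hdiff2 hpos).add hVM).neg
  rw [show -(γ + (-γ - 1)) = 1 by ring] at h
  refine h.congr' ?_
  filter_upwards [hpos, eventually_ne_atTop 0] with x hp hx
  have hF := (sub_pos.2 (hend x)).ne'
  field_simp

end VonMises

/-- Under the von Mises condition with index `γ ≥ 0`,
`u p₀(u) / ∫_u^∞ x p₀²(x)/(1 - F₀(x)) dx → 1` as `u → ∞`. -/
theorem vonMises_integral_ratio_one
    (F₀ : ℝ → ℝ) (γ : ℝ) (hγ : 0 ≤ γ)
    (hcdf : IsCDF F₀) (hend : ∀ x, F₀ x < 1)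
    (hdiff : ∀ x, DifferentiableAt ℝ F₀ x)
    (hdiff2 : ∀ x, DifferentiableAt ℝ (deriv F₀) x)
    (hpos : ∀ᶠ x in atTop, 0 < deriv F₀ x)
    (hVM : VonMises F₀ γ) :
    Tendsto
      (fun u => u * deriv F₀ u / ∫ x in Set.Ioi u, x * (deriv F₀ x) ^ 2 / (1 - F₀ x))
      atTop (nhds 1) := by
  set r : ℝ → ℝ := fun x => -(deriv F₀ x + x * deriv (deriv F₀) x)
  set q : ℝ → ℝ := fun x => x * deriv F₀ x ^ 2 / (1 - F₀ x)
  have hratio : Tendsto (fun x => r x / q x) atTop (𝓝 1) :=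
    hVM.tendsto_neg_deriv_mul_deriv_div hend hdiff hdiff2 hpos
  have hq_pos : ∀ᶠ x in atTop, 0 < q x := by
    filter_upwards [hpos, eventually_gt_atTop 0] with x hp hx
    exact div_pos (mul_pos hx (pow_pos hp 2)) (sub_pos.2 (hend x))
  have hderiv : ∀ x, HasDerivAt (fun y => -(y * deriv F₀ y)) (r x) x := fun x =>
    ((hasDerivAt_id x).mul (hdiff2 x).hasDerivAt).neg.congr_deriv (by simp [r])
  have hlim : Tendsto (fun y => -(y * deriv F₀ y)) atTop (𝓝 0) := by
    simpa using (hVM.tendsto_mul_deriv_zero (by linarith) hcdf.2.2 hend hdiff hdiff2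
      hpos).neg
  have hqm : StronglyMeasurableAtFilter q atTop :=
    ((measurable_id.mul ((measurable_deriv F₀).pow_const 2)).div
      (measurable_const.sub hcdf.1.measurable)).aestronglyMeasurable.stronglyMeasurableAtFilter
  simpa using tendsto_neg_div_integral_Ioi_of_hasDerivAt (.of_forall hderiv) hlim hratio hq_pos hqm
end

section
/- Let F₀ be a twice differentiable cdf with infinite right endpoint, eventually positive density p₀ = F₀′, satisfying the von Mises condition with index γ ≥ 0. Then lim_{u→∞} p₀(u) / ∫_u^∞ p₀²(x)/(1 − F₀(x)) dx = γ + 1. -/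
/-!
L'Hôpital's rule at `+∞`. With `p = F₀'`, both `p u` and the tail integral
`G u = ∫_u^∞ p² / (1 - F₀)` tend to `0`, `G' = -p² / (1 - F₀)`, and `p' / G' = -(1 - F₀) p' / p²`
tends to `γ + 1` by the von Mises condition. Since `γ + 1 > 0`, the same condition gives
`p² / (1 - F₀) ≤ C (-p')` eventually: so `p` is eventually decreasing, hence convergent, and its
limit is `0` because `p` is integrable; then `-p'`, and with it the integrand of `G`, is integrable.
-/

open Filter Real MeasureTheory

open Set Topology

theorem AntitoneOn.exists_tendsto_atTop {f : ℝ → ℝ} {a : ℝ} (hf : AntitoneOn f (Ici a))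
    (hbdd : BddBelow (f '' Ici a)) : ∃ L, Tendsto f atTop (𝓝 L) := by
  have hanti : Antitone fun x => f (max x a) := fun x y hxy =>
    hf (le_max_right x a) (le_max_right y a) (max_le_max_right a hxy)
  have hrange : BddBelow (range fun x => f (max x a)) :=
    hbdd.mono (range_subset_iff.2 fun x => mem_image_of_mem f (le_max_right x a))
  refine ⟨_, (tendsto_atTop_ciInf hanti hrange).congr' ?_⟩
  filter_upwards [eventually_ge_atTop a] with x hx
  rw [max_eq_left hx]

theorem eq_zero_of_integrableOn_Ioi_of_tendsto {E : Type*} [NormedAddCommGroup E] {f : ℝ → E}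
    {a : ℝ} {L : E} (hf : IntegrableOn f (Ioi a)) (hL : Tendsto f atTop (𝓝 L)) : L = 0 := by
  refine IntegrableAtFilter.eq_zero_of_tendsto ⟨Ioi a, Ioi_mem_atTop a, hf⟩ (fun s hs => ?_) hL
  obtain ⟨b, hb⟩ := mem_atTop_sets.1 hs
  rw [← top_le_iff, ← volume_Ici (a := b)]
  exact measure_mono hb

theorem tendsto_zero_of_hasDerivAt_of_antitoneOn {F f : ℝ → ℝ} {a l : ℝ}
    (hF : ∀ x ∈ Ici a, HasDerivAt F (f x) x) (hf₀ : ∀ x ∈ Ici a, 0 ≤ f x)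
    (hf : AntitoneOn f (Ici a)) (hFl : Tendsto F atTop (𝓝 l)) : Tendsto f atTop (𝓝 0) := by
  obtain ⟨L, hL⟩ := hf.exists_tendsto_atTop ⟨0, by rintro _ ⟨x, hx, rfl⟩; exact hf₀ x hx⟩
  have hint : IntegrableOn f (Ioi a) :=
    integrableOn_Ioi_deriv_of_nonneg' hF (fun x hx => hf₀ x (mem_Ici_of_Ioi hx)) hFl
  rwa [← eq_zero_of_integrableOn_Ioi_of_tendsto hint hL]

theorem integrableOn_Ioi_of_le_mul_neg_deriv {f f' g : ℝ → ℝ} {a l C : ℝ}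
    (hf : ∀ x ∈ Ici a, HasDerivAt f (f' x) x) (hf' : ∀ x ∈ Ioi a, f' x ≤ 0)
    (hfl : Tendsto f atTop (𝓝 l)) (hg : AEStronglyMeasurable g (volume.restrict (Ioi a)))
    (hg₀ : ∀ x ∈ Ioi a, 0 ≤ g x) (hgf : ∀ x ∈ Ioi a, g x ≤ C * -f' x) :
    IntegrableOn g (Ioi a) := by
  refine ((integrableOn_Ioi_deriv_of_nonpos' hf hf' hfl).neg.const_mul C).mono' hg
    ((ae_restrict_iff' measurableSet_Ioi).2 (ae_of_all _ fun x hx => ?_))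
  rw [Real.norm_of_nonneg (hg₀ x hx)]
  exact hgf x hx

theorem hasDerivAt_integral_Ioi {E : Type*} [NormedAddCommGroup E] [NormedSpace ℝ E]
    [CompleteSpace E] {g : ℝ → E} {a u : ℝ} (hg : IntegrableOn g (Ioi a))
    (hcont : ContinuousOn g (Ioi a)) (hu : a < u) :
    HasDerivAt (fun v => ∫ x in Ioi v, g x) (-g u) u := by
  have hright : HasDerivAt (fun v => ∫ x in a..v, g x) (g u) u :=
    intervalIntegral.integral_hasDerivAt_right
      ((intervalIntegrable_iff_integrableOn_Ioc_of_le hu.le).2 (hg.mono_set Ioc_subset_Ioi_self))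
      (hcont.stronglyMeasurableAtFilter isOpen_Ioi u hu) (hcont.continuousAt (Ioi_mem_nhds hu))
  refine (hright.const_sub (∫ x in Ioi a, g x)).congr_of_eventuallyEq ?_
  filter_upwards [Ioi_mem_nhds hu] with v hv
  rw [eq_sub_iff_add_eq', intervalIntegral.integral_interval_add_Ioi hg
    (hg.mono_set (Ioi_subset_Ioi (le_of_lt hv)))]

namespace VonMises

variable {F : ℝ → ℝ} {γ : ℝ}

theorem eventually_sq_div_le (hVM : VonMises F γ) (hγ : -1 < γ) (hF : ∀ x, F x < 1)
    (hpos : ∀ᶠ x in atTop, 0 < deriv F x) :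
    ∀ᶠ x in atTop, deriv F x ^ 2 / (1 - F x) ≤ 2 / (γ + 1) * -deriv (deriv F) x := by
  filter_upwards [hpos, hVM.eventually_lt_const (show -γ - 1 < (-γ - 1) / 2 by linarith)]
    with x hp hx
  have h1F : 0 < 1 - F x := sub_pos.2 (hF x)
  rw [div_lt_iff₀ (by positivity)] at hx
  rw [div_le_iff₀ h1F, div_mul_eq_mul_div, div_mul_eq_mul_div, le_div_iff₀ (by linarith)]
  nlinarith

theorem tendsto_deriv_deriv_div_neg (hVM : VonMises F γ) (hpos : ∀ᶠ x in atTop, 0 < deriv F x) :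
    Tendsto (fun x => deriv (deriv F) x / -(deriv F x ^ 2 / (1 - F x))) atTop (𝓝 (γ + 1)) := by
  have hneg := hVM.neg
  rw [show -(-γ - 1) = γ + 1 by ring] at hneg
  refine hneg.congr' ?_
  filter_upwards [hpos] with x hx
  field_simp [hx.ne']

end VonMises

/-- Under the von Mises condition with index `γ ≥ 0`,
`p₀(u) / ∫_u^∞ p₀²(x)/(1 - F₀(x)) dx → γ + 1` as `u → ∞`. -/
theorem vonMises_integral_ratio_gamma_add_one
    (F₀ : ℝ → ℝ) (γ : ℝ) (hγ : 0 ≤ γ)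
    (hcdf : IsCDF F₀) (hend : ∀ x, F₀ x < 1)
    (hdiff : ∀ x, DifferentiableAt ℝ F₀ x)
    (hdiff2 : ∀ x, DifferentiableAt ℝ (deriv F₀) x)
    (hpos : ∀ᶠ x in atTop, 0 < deriv F₀ x)
    (hVM : VonMises F₀ γ) :
    Tendsto
      (fun u => deriv F₀ u / ∫ x in Set.Ioi u, (deriv F₀ x) ^ 2 / (1 - F₀ x))
      atTop (nhds (γ + 1)) := by
  obtain ⟨hmono, -, htop⟩ := hcdf
  set g := fun x => deriv F₀ x ^ 2 / (1 - F₀ x)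
  have hg_pos : ∀ᶠ x in atTop, 0 < g x := by
    filter_upwards [hpos] with x hx using div_pos (by positivity) (sub_pos.2 (hend x))
  obtain ⟨a, ha⟩ := eventually_atTop.1
    ((hVM.eventually_sq_div_le (by linarith) hend hpos).and hg_pos)
  have hp' : ∀ x ∈ Ici a, deriv (deriv F₀) x ≤ 0 := fun x hx => by
    nlinarith [ha x hx, div_pos two_pos (show 0 < γ + 1 by linarith)]
  have hp_cont : Continuous (deriv F₀) := Differentiable.continuous hdiff2
  have hp0 : Tendsto (deriv F₀) atTop (𝓝 0) := tendsto_zero_of_hasDerivAt_of_antitoneOn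
    (fun x _ => (hdiff x).hasDerivAt) (fun x _ => hmono.deriv_nonneg)
    (antitoneOn_of_deriv_nonpos (convex_Ici a) hp_cont.continuousOn
      (Differentiable.differentiableOn hdiff2) fun x hx => hp' x (interior_subset hx)) htop
  have hg_cont : Continuous g := (hp_cont.pow 2).div
    (continuous_const.sub (Differentiable.continuous hdiff)) fun x => (sub_pos.2 (hend x)).ne'
  have hg_int : IntegrableOn g (Ioi a) := integrableOn_Ioi_of_le_mul_neg_deriv
    (fun x _ => (hdiff2 x).hasDerivAt) (fun x hx => hp' x (mem_Ici_of_Ioi hx)) hp0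
    hg_cont.aestronglyMeasurable (fun x hx => (ha x hx.le).2.le) fun x hx => (ha x hx.le).1
  exact HasDerivAt.lhopital_zero_atTop (.of_forall fun x => (hdiff2 x).hasDerivAt)
    ((eventually_gt_atTop a).mono fun u hu =>
      hasDerivAt_integral_Ioi hg_int hg_cont.continuousOn hu)
    (hg_pos.mono fun u hu => neg_ne_zero.2 hu.ne') hp0 (tendsto_integral_Ioi_zero tendsto_id)
    (hVM.tendsto_deriv_deriv_div_neg hpos)
end

section
/- Let F₀ be a twice differentiable cdf with infinite right endpoint, eventually positive density p₀ = F₀′, satisfying the von Mises condition with index γ = 0. Then lim_{u→∞} (1/(1 − F₀(u))) ∫_u^∞ (x − u) p₀²(x)/(1 − F₀(x)) dx = 1. -/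
open Filter Real MeasureTheory

/-! Write `q = 1 - F₀` and `p = F₀'`. For `γ = 0` the von Mises condition says exactly that
`-p' ~ p² / q` at infinity; in particular `p` is eventually positive and decreasing, so
`(x - u) p(x) ≤ 2 (F₀ x - F₀ ((x + u) / 2)) → 0`. Hence `F₀ x - (x - u) p(x)` is an increasing
antiderivative of `(x - u) (-p'(x))` on `(u, ∞)` tending to `1`, which gives
`∫_u^∞ (x - u) (-p'(x)) dx = q(u)`. Integrating the equivalence `-p' ~ p² / q` against the
nonnegative weight `x - u` shows that the integral in the statement is equivalent to `q(u)`. -/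

open Asymptotics Set Topology

section Comparison

variable {α : Type*} [MeasurableSpace α] {μ : Measure α} {f h : α → ℝ} {δ : ℝ}

theorem integrable_of_abs_sub_le_mul (hh : Integrable h μ) (hf : AEStronglyMeasurable f μ)
    (hδ : δ < 1) (hf0 : ∀ᵐ x ∂μ, 0 ≤ f x) (hfh : ∀ᵐ x ∂μ, |h x - f x| ≤ δ * f x) :
    Integrable f μ := by
  refine (hh.const_mul (1 - δ)⁻¹).mono' hf ?_
  filter_upwards [hf0, hfh] with x hx0 hx
  rw [Real.norm_eq_abs, abs_of_nonneg hx0, le_inv_mul_iff₀ (sub_pos.2 hδ)]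
  linarith [neg_abs_le (h x - f x)]

theorem abs_integral_sub_le_mul (hf : Integrable f μ) (hh : Integrable h μ)
    (hfh : ∀ᵐ x ∂μ, |h x - f x| ≤ δ * f x) :
    |∫ x, h x ∂μ - ∫ x, f x ∂μ| ≤ δ * ∫ x, f x ∂μ := by
  rw [← integral_sub hh hf, ← integral_const_mul, ← Real.norm_eq_abs]
  exact norm_integral_le_of_norm_le (hf.const_mul δ)
    (hfh.mono fun x hx => by rwa [Real.norm_eq_abs])

end Comparison

theorem Asymptotics.IsEquivalent.setIntegral_Ioi_mul {m k : ℝ → ℝ} {w : ℝ → ℝ → ℝ}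
    (hmk : m ~[atTop] k) (hk : ∀ᶠ x in atTop, 0 ≤ k x) (hw : ∀ u, ∀ x > u, 0 ≤ w u x)
    (hm : ∀ᶠ u in atTop, IntegrableOn (fun x => w u x * m x) (Ioi u))
    (hkm : ∀ u, AEStronglyMeasurable (fun x => w u x * k x) (volume.restrict (Ioi u))) :
    (fun u => ∫ x in Ioi u, w u x * m x) ~[atTop] fun u => ∫ x in Ioi u, w u x * k x := by
  have hbound : ∀ c > 0, ∀ᶠ u in atTop, ∀ x ∈ Ioi u,
      0 ≤ w u x * k x ∧ |w u x * m x - w u x * k x| ≤ c * (w u x * k x) := by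
    intro c hc
    filter_upwards [eventually_forall_ge_atTop.2 (hk.and (hmk.isLittleO.bound hc))]
      with u hu x hx
    obtain ⟨hkx, hmkx⟩ := hu x (le_of_lt hx)
    rw [Pi.sub_apply, Real.norm_eq_abs, Real.norm_eq_abs, abs_of_nonneg hkx] at hmkx
    have hwx := hw u x hx
    refine ⟨mul_nonneg hwx hkx, ?_⟩
    rw [← mul_sub, abs_mul, abs_of_nonneg hwx, mul_left_comm]
    exact mul_le_mul_of_nonneg_left hmkx hwx
  have hk_int : ∀ᶠ u in atTop, IntegrableOn (fun x => w u x * k x) (Ioi u) := by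
    filter_upwards [hm, hbound (1 / 2) one_half_pos] with u hmu hu
    exact integrable_of_abs_sub_le_mul hmu (hkm u) (by norm_num)
      (ae_restrict_of_forall_mem measurableSet_Ioi fun x hx => (hu x hx).1)
      (ae_restrict_of_forall_mem measurableSet_Ioi fun x hx => (hu x hx).2)
  refine isLittleO_iff.2 fun c hc => ?_
  filter_upwards [hm, hk_int, hbound c hc] with u hmu hku hu
  rw [Pi.sub_apply, Real.norm_eq_abs, Real.norm_eq_abs]
  exact (abs_integral_sub_le_mul hku hmu
    (ae_restrict_of_forall_mem measurableSet_Ioi fun x hx => (hu x hx).2)).trans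
      (mul_le_mul_of_nonneg_left (le_abs_self _) hc.le)

section Tail

variable {F : ℝ → ℝ} {a l : ℝ}

theorem sub_mul_deriv_le_sub (hF : Differentiable ℝ F) (hp : AntitoneOn (deriv F) (Ici a))
    {x y : ℝ} (hay : a ≤ y) (hyx : y ≤ x) : (x - y) * deriv F x ≤ F x - F y := by
  rw [mul_comm]
  refine (convex_Icc y x).mul_sub_le_image_sub_of_le_deriv hF.continuous.continuousOn
    hF.differentiableOn (fun t ht => ?_) y (left_mem_Icc.2 hyx) x (right_mem_Icc.2 hyx) hyx
  rw [interior_Icc] at ht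
  exact hp (hay.trans ht.1.le) (hay.trans hyx) ht.2.le

theorem tendsto_sub_mul_deriv_atTop (hF : Differentiable ℝ F) (hp : AntitoneOn (deriv F) (Ici a))
    (hp0 : ∀ x ≥ a, 0 ≤ deriv F x) (hl : Tendsto F atTop (𝓝 l)) (c : ℝ) :
    Tendsto (fun x => (x - c) * deriv F x) atTop (𝓝 0) := by
  -- compare with the increment of `F` over the right half of `[c, x]`
  have hmid : Tendsto (fun x => (x + c) / 2) atTop atTop :=
    (tendsto_atTop_add_const_right _ c tendsto_id).atTop_div_const two_pos
  have hinc : Tendsto (fun x => 2 * (F x - F ((x + c) / 2))) atTop (𝓝 0) := by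
    simpa using ((hl.sub (hl.comp hmid)).const_mul 2)
  refine squeeze_zero' ?_ ?_ hinc
  · filter_upwards [eventually_ge_atTop c, eventually_ge_atTop a] with x hxc hxa
    exact mul_nonneg (sub_nonneg.2 hxc) (hp0 x hxa)
  · filter_upwards [eventually_ge_atTop c, eventually_ge_atTop (2 * a - c)] with x hxc hxa
    have := sub_mul_deriv_le_sub hF hp (x := x) (y := (x + c) / 2) (by linarith) (by linarith)
    linarith

theorem hasDerivAt_sub_sub_mul_deriv {x : ℝ} (u : ℝ) (hF : DifferentiableAt ℝ F x)
    (hF' : DifferentiableAt ℝ (deriv F) x) :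
    HasDerivAt (fun x => F x - (x - u) * deriv F x) ((x - u) * -deriv (deriv F) x) x := by
  refine (hF.hasDerivAt.sub (((hasDerivAt_id x).sub_const u).mul hF'.hasDerivAt)).congr_deriv ?_
  simp only [id]
  ring

theorem integrableOn_Ioi_sub_mul_neg_deriv_deriv {u : ℝ} (hF : Differentiable ℝ F)
    (hF' : Differentiable ℝ (deriv F)) (hp' : ∀ x ∈ Ioi u, deriv (deriv F) x ≤ 0)
    (hl : Tendsto F atTop (𝓝 l)) (hxp : Tendsto (fun x => (x - u) * deriv F x) atTop (𝓝 0)) :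
    IntegrableOn (fun x => (x - u) * -deriv (deriv F) x) (Ioi u) :=
  integrableOn_Ioi_deriv_of_nonneg
    (hasDerivAt_sub_sub_mul_deriv u (hF u) (hF' u)).continuousAt.continuousWithinAt
    (fun x _ => hasDerivAt_sub_sub_mul_deriv u (hF x) (hF' x))
    (fun x hx => mul_nonneg (sub_nonneg.2 (le_of_lt hx)) (neg_nonneg.2 (hp' x hx)))
    (by simpa using hl.sub hxp)

theorem integral_Ioi_sub_mul_neg_deriv_deriv {u : ℝ} (hF : Differentiable ℝ F)
    (hF' : Differentiable ℝ (deriv F)) (hp' : ∀ x ∈ Ioi u, deriv (deriv F) x ≤ 0)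
    (hl : Tendsto F atTop (𝓝 l)) (hxp : Tendsto (fun x => (x - u) * deriv F x) atTop (𝓝 0)) :
    ∫ x in Ioi u, (x - u) * -deriv (deriv F) x = l - F u := by
  rw [integral_Ioi_of_hasDerivAt_of_nonneg
    (hasDerivAt_sub_sub_mul_deriv u (hF u) (hF' u)).continuousAt.continuousWithinAt
    (fun x _ => hasDerivAt_sub_sub_mul_deriv u (hF x) (hF' x))
    (fun x hx => mul_nonneg (sub_nonneg.2 (le_of_lt hx)) (neg_nonneg.2 (hp' x hx)))
    (by simpa using hl.sub hxp)]
  simp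

end Tail

namespace VonMises

variable {F : ℝ → ℝ}

theorem eventually_pos {γ : ℝ} (hVM : VonMises F γ) (hγ : -1 < γ) (hF : Monotone F)
    (hl : Tendsto F atTop (𝓝 1)) :
    ∀ᶠ x in atTop, 0 < 1 - F x ∧ 0 < deriv F x ∧ deriv (deriv F) x < 0 := by
  filter_upwards [Tendsto.eventually_lt_const (by linarith : -γ - 1 < 0) hVM] with x hx
  have hq : 0 ≤ 1 - F x := sub_nonneg.2 (hF.ge_of_tendsto hl x)
  have hnum : (1 - F x) * deriv (deriv F) x < 0 := by
    by_contra! h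
    exact hx.not_ge (div_nonneg h (sq_nonneg _))
  have hp : deriv F x ≠ 0 := by
    rintro h
    simp [h] at hx
  have hq' : 1 - F x ≠ 0 := by
    rintro h
    simp [h] at hnum
  exact ⟨hq.lt_of_ne' hq', hF.deriv_nonneg.lt_of_ne' hp, neg_of_mul_neg_right hnum hq⟩

theorem neg_deriv_deriv_isEquivalent (hVM : VonMises F 0) :
    (fun x => -deriv (deriv F) x) ~[atTop] fun x => deriv F x ^ 2 / (1 - F x) := by
  refine isEquivalent_of_tendsto_one ?_
  have h := Tendsto.neg hVM
  rw [show -(-(0 : ℝ) - 1) = 1 by norm_num] at h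
  refine h.congr fun x => ?_
  rw [Pi.div_apply, div_div_eq_mul_div]
  ring

end VonMises

theorem vonMises_gamma_zero_integral_ratio_one_general
    (F₀ : ℝ → ℝ)
    (hcdf : IsCDF F₀)
    (hdiff : ∀ x, DifferentiableAt ℝ F₀ x)
    (hdiff2 : ∀ x, DifferentiableAt ℝ (deriv F₀) x)
    (hVM : VonMises F₀ 0) :
    Tendsto
      (fun u =>
        (1 / (1 - F₀ u)) * ∫ x in Set.Ioi u, (x - u) * (deriv F₀ x) ^ 2 / (1 - F₀ x))
      atTop (nhds 1) := by
  obtain ⟨hmono, -, htop⟩ := hcdf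
  have hmeas : Measurable F₀ := hmono.measurable
  obtain ⟨a, ha⟩ := eventually_atTop.1 (hVM.eventually_pos neg_one_lt_zero hmono htop)
  have hp' : ∀ u ≥ a, ∀ x ∈ Ioi u, deriv (deriv F₀) x ≤ 0 :=
    fun u hu x hx => (ha x (hu.trans (le_of_lt hx))).2.2.le
  have hanti : AntitoneOn (deriv F₀) (Ici a) :=
    antitoneOn_of_deriv_nonpos (convex_Ici a) (Differentiable.continuous hdiff2).continuousOn
      (Differentiable.differentiableOn hdiff2) fun x hx => hp' a le_rfl x (by simpa using hx)
  have hxp (u : ℝ) : Tendsto (fun x => (x - u) * deriv F₀ x) atTop (𝓝 0) :=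
    tendsto_sub_mul_deriv_atTop hdiff hanti (fun x hx => (ha x hx).2.1.le) htop u
  have hequiv : (fun u => ∫ x in Ioi u, (x - u) * -deriv (deriv F₀) x) ~[atTop]
      fun u => ∫ x in Ioi u, (x - u) * (deriv F₀ x ^ 2 / (1 - F₀ x)) :=
    hVM.neg_deriv_deriv_isEquivalent.setIntegral_Ioi_mul
      ((eventually_ge_atTop a).mono fun x hx => div_nonneg (sq_nonneg _) (ha x hx).1.le)
      (fun u x hx => sub_nonneg.2 (le_of_lt hx))
      ((eventually_ge_atTop a).mono fun u hu =>
        integrableOn_Ioi_sub_mul_neg_deriv_deriv hdiff hdiff2 (hp' u hu) htop (hxp u))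
      (fun u => (by fun_prop : Measurable _).aestronglyMeasurable)
  have hQ : (fun u => 1 - F₀ u) ~[atTop] _ := hequiv.congr_left
    ((eventually_ge_atTop a).mono fun u hu =>
      integral_Ioi_sub_mul_neg_deriv_deriv hdiff hdiff2 (hp' u hu) htop (hxp u))
  have hQ0 : ∀ᶠ u in atTop, 1 - F₀ u ≠ 0 :=
    (eventually_ge_atTop a).mono fun u hu => (ha u hu).1.ne'
  simpa only [mul_div_assoc, one_div_mul_eq_div, Pi.div_def] using
    (isEquivalent_iff_tendsto_one hQ0).1 hQ.symm

/-- Under the von Mises condition with index `γ = 0`,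
`(1/(1 - F₀(u))) ∫_u^∞ (x - u) p₀²(x)/(1 - F₀(x)) dx → 1` as `u → ∞`. -/
theorem vonMises_gamma_zero_integral_ratio_one
    (F₀ : ℝ → ℝ)
    (hcdf : IsCDF F₀) (hend : ∀ x, F₀ x < 1)
    (hdiff : ∀ x, DifferentiableAt ℝ F₀ x)
    (hdiff2 : ∀ x, DifferentiableAt ℝ (deriv F₀) x)
    (hpos : ∀ᶠ x in atTop, 0 < deriv F₀ x)
    (hVM : VonMises F₀ 0) :
    Tendsto
      (fun u =>
        (1 / (1 - F₀ u)) * ∫ x in Set.Ioi u, (x - u) * (deriv F₀ x) ^ 2 / (1 - F₀ x))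
      atTop (nhds 1) :=
  vonMises_gamma_zero_integral_ratio_one_general F₀ hcdf hdiff hdiff2 hVM
end

section
/- Let F₀ be a continuously differentiable cdf with density p₀ = F₀′ and infinite right endpoint, let q and u₀ be real numbers with F₀(q) < 1 and q > 0, u₀ > 0, and let X* be a random variable with cdf F_q(x) = (F₀(x) − F₀(q))/(1 − F₀(q)) for x > q. Define Y* = ln(1 − F₀(u₀ X*/q)) − ln(1 − F₀(X*)). Then, provided the expectations and integrals involved are finite, E[Y*] = ln((1 − F₀(u₀))/(1 − F₀(q))) − (f(q) − 1), where f(q) = ∫_q^∞ (u₀/q) · ((1 − F₀(x))/(1 − F₀(q))) · p₀(u₀ x/q)/(1 − F₀(u₀ x/q)) dx. -/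
/-!
Under the exceedance law, which has density `p₀ / (1 - F₀ q)` on `(q, ∞)`, `E[Y*]` becomes an
integral over `(q, ∞)`. The term `ln (1 - F₀ x)` integrates in closed form, since
`(1 - F₀) - (1 - F₀) ln (1 - F₀)` is an antiderivative of `p₀ ln (1 - F₀)`. The term
`ln (1 - F₀ (u₀ x / q))` is integrated by parts against `1 - F₀ x`, which produces `f(q)` and the
boundary term `(1 - F₀ x) ln (1 - F₀ (u₀ x / q))`. This has a limit `-L ≤ 0` at infinity because
its derivative is integrable, and `L = 0`: otherwise the integrand of `f(q)` would eventually
dominate `L / 2` times the derivative of `ln (-ln (1 - F₀ (u₀ x / q)))`, which tends to infinity.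
-/

open MeasureTheory Filter Real Set Topology

namespace IsCDF

variable {F : ℝ → ℝ}

theorem nonneg (hF : IsCDF F) (x : ℝ) : 0 ≤ F x :=
  le_of_tendsto hF.2.1 (eventually_atBot.2 ⟨x, fun _ hy => hF.1 hy⟩)

theorem le_one (hF : IsCDF F) (x : ℝ) : F x ≤ 1 :=
  ge_of_tendsto hF.2.2 (eventually_atTop.2 ⟨x, fun _ hy => hF.1 hy⟩)

theorem log_one_sub_nonpos (hF : IsCDF F) (x : ℝ) : log (1 - F x) ≤ 0 :=
  log_nonpos (sub_nonneg.2 (hF.le_one x)) (sub_le_self _ (hF.nonneg x))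

theorem tendsto_one_sub_atTop (hF : IsCDF F) : Tendsto (fun x => 1 - F x) atTop (𝓝 0) := by
  simpa using tendsto_const_nhds.sub hF.2.2 (a := (1 : ℝ))

theorem tendsto_neg_log_one_sub_atTop (hF : IsCDF F) (hF1 : ∀ x, F x < 1) :
    Tendsto (fun x => -log (1 - F x)) atTop atTop :=
  tendsto_neg_atBot_atTop.comp <| tendsto_log_nhdsGT_zero.comp <|
    tendsto_nhdsWithin_of_tendsto_nhds_of_eventually_within _ hF.tendsto_one_sub_atTop
      (Eventually.of_forall fun x => sub_pos.2 (hF1 x))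

end IsCDF

theorem nonpos_of_tendsto_mul_of_integrableOn_mul_deriv {w V V' : ℝ → ℝ} {a L : ℝ}
    (hV : ∀ x, HasDerivAt V (V' x) x) (hV' : ∀ x, 0 ≤ V' x) (hVtop : Tendsto V atTop atTop)
    (hint : IntegrableOn (fun x => w x * V' x) (Ioi a))
    (hlim : Tendsto (fun x => w x * V x) atTop (𝓝 L)) : L ≤ 0 := by
  by_contra! hL
  obtain ⟨M, hM⟩ := eventually_atTop.1 <| (hlim.eventually (lt_mem_nhds (half_lt_self hL))).and
    ((hVtop.eventually_ge_atTop 1).and (eventually_gt_atTop a))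
  have hbound : ∀ b ≥ M, L / 2 * log (V b) - L / 2 * log (V M) ≤ ∫ x in Ioi a, ‖w x * V' x‖ := by
    intro b hMb
    have hVpos : ∀ x ∈ Icc M b, 0 < V x := fun x hx => one_pos.trans_le (hM x hx.1).2.1
    have hsub : Icc M b ⊆ Ioi a := fun x hx => (hM M le_rfl).2.2.trans_le hx.1
    calc L / 2 * log (V b) - L / 2 * log (V M)
        ≤ ∫ x in M..b, w x * V' x := by
          refine intervalIntegral.sub_le_integral_of_hasDeriv_right_of_le hMb
            (fun x hx => ((hV x).log (hVpos x hx).ne').continuousAt.continuousWithinAt.const_mul _)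
            (fun x hx =>
              (((hV x).log (hVpos x (Ioo_subset_Icc_self hx)).ne').const_mul _).hasDerivWithinAt)
            (hint.mono_set hsub) (fun x hx => ?_)
          have hx := hM x hx.1.le
          rw [mul_div_assoc', div_le_iff₀ (one_pos.trans_le hx.2.1), mul_right_comm]
          exact mul_le_mul_of_nonneg_right hx.1.le (hV' x)
      _ ≤ ∫ x in Ioi a, ‖w x * V' x‖ := by
          rw [intervalIntegral.integral_of_le hMb]
          refine (setIntegral_mono_on (hint.mono_set (Ioc_subset_Icc_self.trans hsub))
            (IntegrableOn.mono_set hint.norm (Ioc_subset_Icc_self.trans hsub)) measurableSet_Ioc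
            fun x _ => le_norm_self _).trans
            (setIntegral_mono_set hint.norm (ae_of_all _ fun x => norm_nonneg _)
              (Ioc_subset_Icc_self.trans hsub).eventuallyLE)
  have htop : Tendsto (fun b => L / 2 * log (V b) - L / 2 * log (V M)) atTop atTop :=
    tendsto_atTop_add_const_right _ _
      ((tendsto_log_atTop.comp hVtop).const_mul_atTop (half_pos hL))
  obtain ⟨b, hb, hMb⟩ := ((htop.eventually_gt_atTop _).and (eventually_ge_atTop M)).exists
  exact (hbound b hMb).not_gt hb

section

variable {F φ φ' : ℝ → ℝ}

theorem hasDerivAt_one_sub_sub_mul_log_one_sub {x : ℝ} (hFx : DifferentiableAt ℝ F x)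
    (hF1 : F x < 1) :
    HasDerivAt (fun y => (1 - F y) - (1 - F y) * log (1 - F y)) (log (1 - F x) * deriv F x) x := by
  have hS := hFx.hasDerivAt.const_sub 1
  have h := hS.sub ((hasDerivAt_mul_log (sub_pos.2 hF1).ne').comp x hS)
  rwa [show -deriv F x - (log (1 - F x) + 1) * -deriv F x = log (1 - F x) * deriv F x by ring]
    at h

theorem tendsto_one_sub_sub_mul_log_one_sub (hF : IsCDF F) :
    Tendsto (fun y => (1 - F y) - (1 - F y) * log (1 - F y)) atTop (𝓝 0) := by
  have hS := hF.tendsto_one_sub_atTop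
  simpa using hS.sub ((continuous_mul_log.tendsto 0).comp hS)

theorem integrableOn_log_one_sub_mul_deriv (hF : IsCDF F) (hFd : Differentiable ℝ F)
    (hF1 : ∀ x, F x < 1) (a : ℝ) :
    IntegrableOn (fun x => log (1 - F x) * deriv F x) (Ioi a) :=
  integrableOn_Ioi_deriv_of_nonpos'
    (fun x _ => hasDerivAt_one_sub_sub_mul_log_one_sub (hFd x) (hF1 x))
    (fun x _ => mul_nonpos_of_nonpos_of_nonneg (hF.log_one_sub_nonpos x) hF.1.deriv_nonneg)
    (tendsto_one_sub_sub_mul_log_one_sub hF)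

theorem integral_Ioi_log_one_sub_mul_deriv (hF : IsCDF F) (hFd : Differentiable ℝ F)
    (hF1 : ∀ x, F x < 1) (a : ℝ) :
    ∫ x in Ioi a, log (1 - F x) * deriv F x = (1 - F a) * log (1 - F a) - (1 - F a) := by
  rw [integral_Ioi_of_hasDerivAt_of_nonpos'
    (fun x _ => hasDerivAt_one_sub_sub_mul_log_one_sub (hFd x) (hF1 x))
    (fun x _ => mul_nonpos_of_nonpos_of_nonneg (hF.log_one_sub_nonpos x) hF.1.deriv_nonneg)
    (tendsto_one_sub_sub_mul_log_one_sub hF)]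
  ring

theorem hasDerivAt_neg_log_one_sub_comp {x : ℝ} (hF : DifferentiableAt ℝ F (φ x))
    (hφ : HasDerivAt φ (φ' x) x) (hF1 : F (φ x) < 1) :
    HasDerivAt (fun y => -log (1 - F (φ y))) (φ' x * deriv F (φ x) / (1 - F (φ x))) x := by
  have h := ((hF.hasDerivAt.comp x hφ).const_sub 1).log (sub_pos.2 hF1).ne'
  rw [show φ' x * deriv F (φ x) / (1 - F (φ x)) = -(-(deriv F (φ x) * φ' x) / (1 - F (φ x))) by
    ring]
  exact h.neg

theorem hasDerivAt_one_sub_mul_log_one_sub_comp {x : ℝ} (hFd : Differentiable ℝ F)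
    (hφ : HasDerivAt φ (φ' x) x) (hF1 : F (φ x) < 1) :
    HasDerivAt (fun y => (1 - F y) * log (1 - F (φ y)))
      (-(log (1 - F (φ x)) * deriv F x)
        - (1 - F x) * (φ' x * deriv F (φ x) / (1 - F (φ x)))) x := by
  have hlog := (((hFd (φ x)).hasDerivAt.comp x hφ).const_sub 1).log (sub_pos.2 hF1).ne'
  refine (((hFd x).hasDerivAt.const_sub 1).fun_mul hlog).congr_deriv ?_
  simp only [Function.comp_apply]
  ring

theorem tendsto_one_sub_mul_log_one_sub_comp (hF : IsCDF F) (hFd : Differentiable ℝ F)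
    (hF1 : ∀ x, F x < 1) (hφ : ∀ x, HasDerivAt φ (φ' x) x) (hφ' : ∀ x, 0 ≤ φ' x)
    (hφtop : Tendsto φ atTop atTop) {a : ℝ}
    (hA : IntegrableOn (fun x => log (1 - F (φ x)) * deriv F x) (Ioi a))
    (hf : IntegrableOn (fun x => (1 - F x) * (φ' x * deriv F (φ x) / (1 - F (φ x)))) (Ioi a)) :
    Tendsto (fun x => (1 - F x) * log (1 - F (φ x))) atTop (𝓝 0) := by
  have hlim := tendsto_limUnder_of_hasDerivAt_of_integrableOn_Ioi
    (fun x _ => hasDerivAt_one_sub_mul_log_one_sub_comp hFd (hφ x) (hF1 (φ x))) (hA.neg.sub hf)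
  set L := limUnder atTop fun x => (1 - F x) * log (1 - F (φ x))
  have hL : L ≤ 0 := le_of_tendsto' hlim fun x =>
    mul_nonpos_of_nonneg_of_nonpos (sub_nonneg.2 (hF.le_one x)) (hF.log_one_sub_nonpos (φ x))
  have hnegL : -L ≤ 0 := by
    refine nonpos_of_tendsto_mul_of_integrableOn_mul_deriv
      (fun x => hasDerivAt_neg_log_one_sub_comp (hFd (φ x)) (hφ x) (hF1 (φ x)))
      (fun x => div_nonneg (mul_nonneg (hφ' x) hF.1.deriv_nonneg) (sub_nonneg.2 (hF.le_one _)))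
      ((hF.tendsto_neg_log_one_sub_atTop hF1).comp hφtop) hf ?_
    simpa using hlim.neg
  rwa [le_antisymm hL (neg_nonpos.1 hnegL)] at hlim

theorem integral_Ioi_log_one_sub_comp_mul_deriv (hF : IsCDF F) (hFd : Differentiable ℝ F)
    (hF1 : ∀ x, F x < 1) (hφ : ∀ x, HasDerivAt φ (φ' x) x) (hφ' : ∀ x, 0 ≤ φ' x)
    (hφtop : Tendsto φ atTop atTop) {a : ℝ}
    (hA : IntegrableOn (fun x => log (1 - F (φ x)) * deriv F x) (Ioi a))
    (hf : IntegrableOn (fun x => (1 - F x) * (φ' x * deriv F (φ x) / (1 - F (φ x)))) (Ioi a)) :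
    ∫ x in Ioi a, log (1 - F (φ x)) * deriv F x =
      (1 - F a) * log (1 - F (φ a))
        - ∫ x in Ioi a, (1 - F x) * (φ' x * deriv F (φ x) / (1 - F (φ x))) := by
  have h := integral_Ioi_of_hasDerivAt_of_tendsto'
    (fun x _ => hasDerivAt_one_sub_mul_log_one_sub_comp hFd (hφ x) (hF1 (φ x))) (hA.neg.sub hf)
    (tendsto_one_sub_mul_log_one_sub_comp hF hFd hF1 hφ hφ' hφtop hA hf)
  have hA' : IntegrableOn (fun x => -(log (1 - F (φ x)) * deriv F x)) (Ioi a) := hA.neg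
  rw [integral_sub hA' hf, integral_neg] at h
  linarith

theorem integral_Ioi_log_tail_ratio_mul_deriv (hF : IsCDF F) (hFd : Differentiable ℝ F)
    (hF1 : ∀ x, F x < 1) (hφ : ∀ x, HasDerivAt φ (φ' x) x) (hφ' : ∀ x, 0 ≤ φ' x)
    (hφtop : Tendsto φ atTop atTop) {a : ℝ}
    (hY : IntegrableOn (fun x => (log (1 - F (φ x)) - log (1 - F x)) * deriv F x) (Ioi a))
    (hf : IntegrableOn (fun x => (1 - F x) * (φ' x * deriv F (φ x) / (1 - F (φ x)))) (Ioi a)) :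
    ∫ x in Ioi a, (log (1 - F (φ x)) - log (1 - F x)) * deriv F x =
      (1 - F a) * (log (1 - F (φ a)) - log (1 - F a) + 1)
        - ∫ x in Ioi a, (1 - F x) * (φ' x * deriv F (φ x) / (1 - F (φ x))) := by
  have hB := integrableOn_log_one_sub_mul_deriv hF hFd hF1 a
  have hA : IntegrableOn (fun x => log (1 - F (φ x)) * deriv F x) (Ioi a) :=
    (hY.add hB).congr_fun (fun x _ => by simp only [Pi.add_apply]; ring) measurableSet_Ioi
  calc ∫ x in Ioi a, (log (1 - F (φ x)) - log (1 - F x)) * deriv F x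
      = (∫ x in Ioi a, log (1 - F (φ x)) * deriv F x)
          - ∫ x in Ioi a, log (1 - F x) * deriv F x := by
        simp_rw [← integral_sub hA hB, sub_mul]
    _ = _ := by
        rw [integral_Ioi_log_one_sub_comp_mul_deriv hF hFd hF1 hφ hφ' hφtop hA hf,
          integral_Ioi_log_one_sub_mul_deriv hF hFd hF1]
        ring

end

/-- The law with cdf `F_q`, through its density `p₀ / (1 - F₀ q)` on `(q, ∞)`. -/
noncomputable def exceedanceLaw (F : ℝ → ℝ) (q : ℝ) : Measure ℝ :=
  (volume.restrict (Ioi q)).withDensity fun x => ENNReal.ofReal (deriv F x / (1 - F q))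

section exceedanceLaw

variable {F : ℝ → ℝ} {q : ℝ}

theorem exceedanceLaw_Iic (hF : ContDiff ℝ 1 F) (hmono : Monotone F) (hFq : F q < 1) {x : ℝ}
    (hqx : q < x) : exceedanceLaw F q (Iic x) = ENNReal.ofReal ((F x - F q) / (1 - F q)) := by
  have hp := hF.continuous_deriv le_rfl
  rw [exceedanceLaw, withDensity_apply _ measurableSet_Iic,
    Measure.restrict_restrict measurableSet_Iic, inter_comm, Ioi_inter_Iic,
    ← ofReal_integral_eq_lintegral_ofReal (hp.div_const _).integrableOn_Ioc
      (ae_of_all _ fun y => div_nonneg hmono.deriv_nonneg (sub_pos.2 hFq).le),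
    ← intervalIntegral.integral_of_le hqx.le, intervalIntegral.integral_div,
    intervalIntegral.integral_deriv_eq_sub (fun y _ => (hF.differentiable one_ne_zero) y)
      (hp.intervalIntegrable _ _)]

theorem exceedanceLaw_Iic_of_le {x : ℝ} (hxq : x ≤ q) : exceedanceLaw F q (Iic x) = 0 := by
  rw [exceedanceLaw, withDensity_apply _ measurableSet_Iic,
    Measure.restrict_restrict measurableSet_Iic, inter_comm, Ioi_inter_Iic,
    Ioc_eq_empty hxq.not_gt, setLIntegral_empty]

theorem map_eq_exceedanceLaw {Ω : Type*} [MeasurableSpace Ω] {P : Measure Ω} [IsFiniteMeasure P]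
    {X : Ω → ℝ} (hX : Measurable X) (hF : ContDiff ℝ 1 F) (hmono : Monotone F) (hFq : F q < 1)
    (hXgt : ∀ᵐ ω ∂P, q < X ω)
    (hXdist : ∀ x > q, P {ω | X ω ≤ x} = ENNReal.ofReal ((F x - F q) / (1 - F q))) :
    P.map X = exceedanceLaw F q := by
  refine Measure.ext_of_Iic _ _ fun x => ?_
  rw [Measure.map_apply hX measurableSet_Iic]
  rcases le_or_gt x q with hxq | hqx
  · rw [exceedanceLaw_Iic_of_le hxq, measure_eq_zero_iff_ae_notMem]
    filter_upwards [hXgt] with ω hω using fun hle => (hle.trans hxq).not_gt hω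
  · exact (hXdist x hqx).trans (exceedanceLaw_Iic hF hmono hFq hqx).symm

theorem integral_exceedanceLaw (hF : Monotone F) (hFq : F q < 1) (g : ℝ → ℝ) :
    ∫ x, g x ∂exceedanceLaw F q = (∫ x in Ioi q, g x * deriv F x) / (1 - F q) := by
  rw [exceedanceLaw, integral_withDensity_eq_integral_toReal_smul
    ((measurable_deriv F).div_const _).ennreal_ofReal (ae_of_all _ fun _ => ENNReal.ofReal_lt_top),
    ← integral_div]
  refine setIntegral_congr_fun measurableSet_Ioi fun x _ => ?_
  rw [ENNReal.toReal_ofReal (div_nonneg hF.deriv_nonneg (sub_pos.2 hFq).le), smul_eq_mul]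
  ring

theorem integrable_exceedanceLaw_iff (hF : Monotone F) (hFq : F q < 1) {g : ℝ → ℝ} :
    Integrable g (exceedanceLaw F q) ↔ IntegrableOn (fun x => g x * deriv F x) (Ioi q) := by
  rw [exceedanceLaw, integrable_withDensity_iff
    ((measurable_deriv F).div_const _).ennreal_ofReal (ae_of_all _ fun _ => ENNReal.ofReal_lt_top),
    IntegrableOn]
  simp_rw [ENNReal.toReal_ofReal (div_nonneg hF.deriv_nonneg (sub_pos.2 hFq).le), div_eq_mul_inv,
    ← mul_assoc]
  exact integrable_mul_const_iff (isUnit_iff_ne_zero.2 (inv_pos.2 (sub_pos.2 hFq)).ne') _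

end exceedanceLaw

/-- **Expectation of `Y* = ln(1 - F₀(u₀ X*/q)) - ln(1 - F₀(X*))` for the exceedance
distribution.** If `X*` has the exceedance cdf `F_q(x) = (F₀(x) - F₀(q))/(1 - F₀(q))` for
`x > q`, then `E[Y*] = ln((1 - F₀(u₀))/(1 - F₀(q))) - (f(q) - 1)`, where
`f(q) = ∫_q^∞ (u₀/q)·((1 - F₀(x))/(1 - F₀(q)))·p₀(u₀x/q)/(1 - F₀(u₀x/q)) dx`. -/
theorem exceedance_log_tail_ratio_expectation
    {Ω : Type*} [MeasurableSpace Ω] (P : Measure Ω) [IsProbabilityMeasure P]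
    (F₀ : ℝ → ℝ) (hcdf : IsCDF F₀) (hcont : ContDiff ℝ 1 F₀)
    (hend : ∀ x, 1 - F₀ x > 0)
    (q u₀ : ℝ) (hq : 0 < q) (hu₀ : 0 < u₀) (hFq : F₀ q < 1)
    (X : Ω → ℝ) (hXmeas : Measurable X)
    (hXgt : ∀ᵐ ω ∂P, q < X ω)
    (hXdist : ∀ x > q, P {ω | X ω ≤ x} = ENNReal.ofReal ((F₀ x - F₀ q) / (1 - F₀ q)))
    (hYint : Integrable
      (fun ω => Real.log (1 - F₀ (u₀ * X ω / q)) - Real.log (1 - F₀ (X ω))) P)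
    (hfint : IntegrableOn
      (fun x => u₀ / q * ((1 - F₀ x) / (1 - F₀ q)) *
        (deriv F₀ (u₀ * x / q) / (1 - F₀ (u₀ * x / q))))
      (Set.Ioi q)) :
    ∫ ω, (Real.log (1 - F₀ (u₀ * X ω / q)) - Real.log (1 - F₀ (X ω))) ∂P =
      Real.log ((1 - F₀ u₀) / (1 - F₀ q)) -
        ((∫ x in Set.Ioi q,
            u₀ / q * ((1 - F₀ x) / (1 - F₀ q)) *
              (deriv F₀ (u₀ * x / q) / (1 - F₀ (u₀ * x / q)))) - 1) := by
  have hF1 : ∀ x, F₀ x < 1 := fun x => sub_pos.1 (hend x)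
  have hFd : Differentiable ℝ F₀ := hcont.differentiable one_ne_zero
  have hφ : ∀ x, HasDerivAt (fun x => u₀ * x / q) (u₀ / q) x := fun x => by
    simpa using ((hasDerivAt_id x).const_mul u₀).div_const q
  have hφtop : Tendsto (fun x => u₀ * x / q) atTop atTop :=
    (tendsto_id.const_mul_atTop hu₀).atTop_div_const hq
  have hlaw := map_eq_exceedanceLaw hXmeas hcont hcdf.1 hFq hXgt hXdist
  set g := fun x => log (1 - F₀ (u₀ * x / q)) - log (1 - F₀ x)
  have hg : Measurable g := by
    have := hcont.continuous.measurable
    fun_prop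
  have hgint : IntegrableOn (fun x => g x * deriv F₀ x) (Ioi q) := by
    rw [← integrable_exceedanceLaw_iff hcdf.1 hFq, ← hlaw,
      integrable_map_measure hg.aestronglyMeasurable hXmeas.aemeasurable]
    exact hYint
  have hc : 1 - F₀ q ≠ 0 := (hend q).ne'
  have hf_eq : ∀ x, u₀ / q * ((1 - F₀ x) / (1 - F₀ q)) *
      (deriv F₀ (u₀ * x / q) / (1 - F₀ (u₀ * x / q))) =
        (1 - F₀ x) * (u₀ / q * deriv F₀ (u₀ * x / q) / (1 - F₀ (u₀ * x / q))) / (1 - F₀ q) :=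
    fun x => by ring
  have hf'int : IntegrableOn
      (fun x => (1 - F₀ x) * (u₀ / q * deriv F₀ (u₀ * x / q) / (1 - F₀ (u₀ * x / q)))) (Ioi q) :=
    IntegrableOn.congr_fun (hfint.mul_const (1 - F₀ q)) (fun x _ => by rw [hf_eq]; field_simp)
      measurableSet_Ioi
  rw [← integral_map hXmeas.aemeasurable hg.aestronglyMeasurable, hlaw,
    integral_exceedanceLaw hcdf.1 hFq,
    integral_Ioi_log_tail_ratio_mul_deriv hcdf hFd hF1 hφ (fun _ => (div_pos hu₀ hq).le) hφtop
      hgint hf'int, integral_congr_ae (ae_of_all _ hf_eq), integral_div,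
    mul_div_cancel_right₀ _ hq.ne', log_div (hend u₀).ne' hc, sub_div,
    mul_div_cancel_left₀ _ hc]
  ring
end
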